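/- arXiv:2502.08613 — 5 statements merged into one kernel-verified Lean document; each statement's English description precedes it below -/
import Mathlib

section
/- Let E be the expectation under a probability measure, let dq be an ℝⁿ-valued random vector and φ ∈ ℝⁿ a vector such that E[exp(-φ·dq)] is finite, and let E^φ be the tilted probability measure with density dE^φ/dE = exp(-φ·dq)/E[exp(-φ·dq)]. Suppose E^φ satisfies the calibration condition E^φ[dq] = 0. Then for every probability measure Ē mutually absolutely continuous with E, with dq integrable under Ē, Ē[dq] = 0, and S[Ē|E^φ] finite, one has S[Ē|E] ≥ S[E^φ|E]; that is, among equivalent measures satisfying the calibration condition, the price measure E^φ has minimum entropy relative to the expectation measure E. -/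
open MeasureTheory

/-- The relative entropy `S[ν|μ] := E_μ[(dν/dμ) log (dν/dμ)]`. -/
noncomputable def relEntropy {Ω : Type*} [MeasurableSpace Ω] (ν μ : Measure Ω) : ℝ :=
  ∫ ω, (ν.rnDeriv μ ω).toReal * Real.log (ν.rnDeriv μ ω).toReal ∂μ

/-!
Write `f = -φ·dq` and `Z = E[exp f]`, so that `E^φ = E.tilted f` and `log dE^φ/dE = f - log Z`.
For every `Ē ≪ E` with `f` integrable, the chain rule for log-likelihood ratios gives
`S[Ē|E] = S[Ē|E^φ] + Ē[f] - log Z`. Calibration makes `Ē[f] = E^φ[f] = 0`, so taking `Ē = E^φ`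
yields `S[E^φ|E] = -log Z`, and `S[Ē|E] - S[E^φ|E] = S[Ē|E^φ] ≥ 0` by Gibbs' inequality.
-/

open InformationTheory

namespace MeasureTheory

variable {α : Type*} {mα : MeasurableSpace α} {μ ν : Measure α}

lemma relEntropy_eq_integral_llr [SigmaFinite μ] [μ.HaveLebesgueDecomposition ν] (hμν : μ ≪ ν) :
    relEntropy μ ν = ∫ x, llr μ ν x ∂μ :=
  integral_rnDeriv_mul_log hμν

lemma relEntropy_self [SigmaFinite μ] : relEntropy μ μ = 0 := by
  rw [relEntropy_eq_integral_llr Measure.AbsolutelyContinuous.rfl, integral_congr_ae (llr_self μ),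
    Pi.zero_def, integral_zero]

lemma relEntropy_nonneg [IsFiniteMeasure μ] [IsFiniteMeasure ν] (hμν : μ ≪ ν)
    (h_univ : μ Set.univ = ν Set.univ) : 0 ≤ relEntropy μ ν := by
  rw [relEntropy_eq_integral_llr hμν, ← toReal_klDiv_of_measure_eq hμν h_univ]
  exact ENNReal.toReal_nonneg

lemma relEntropy_eq_relEntropy_tilted_add [IsProbabilityMeasure μ] [IsFiniteMeasure ν]
    {f : α → ℝ} (hμν : μ ≪ ν) (hfμ : Integrable f μ) (hfν : Integrable (fun x ↦ Real.exp (f x)) ν)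
    (h_int : Integrable (llr μ (ν.tilted f)) μ) :
    relEntropy μ ν
      = relEntropy μ (ν.tilted f) + ∫ x, f x ∂μ - Real.log (∫ x, Real.exp (f x) ∂ν) := by
  have hllr : Integrable (llr μ ν) μ := by
    refine (h_int.add (hfμ.sub (integrable_const (Real.log (∫ x, Real.exp (f x) ∂ν))))).congr ?_
    filter_upwards [llr_tilted_right hμν hfν] with x hx
    rw [Pi.add_apply, Pi.sub_apply, hx]
    ring
  rw [relEntropy_eq_integral_llr hμν,
    relEntropy_eq_integral_llr (hμν.trans (absolutelyContinuous_tilted hfν)),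
    integral_llr_tilted_right hμν hfμ hfν hllr]
  ring

variable {ι : Type*} [Fintype ι] {X : α → ι → ℝ}

lemma integrable_sum_mul (c : ι → ℝ) (hX : ∀ i, Integrable (fun x ↦ X x i) μ) :
    Integrable (fun x ↦ ∑ i, c i * X x i) μ :=
  integrable_finsetSum _ fun i _ ↦ (hX i).const_mul (c i)

lemma integral_sum_mul_eq_zero (c : ι → ℝ) (hX : ∀ i, Integrable (fun x ↦ X x i) μ)
    (h_zero : ∀ i, ∫ x, X x i ∂μ = 0) : ∫ x, ∑ i, c i * X x i ∂μ = 0 := by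
  rw [integral_finsetSum _ fun i _ ↦ (hX i).const_mul (c i)]
  simp [integral_const_mul, h_zero]

end MeasureTheory

theorem relEntropy_tilted_min_general {Ω : Type*} [MeasurableSpace Ω] {n : ℕ}
    (P : Measure Ω) [IsProbabilityMeasure P] (dq : Ω → Fin n → ℝ) (φ : Fin n → ℝ)
    (hint : Integrable (fun ω => Real.exp (-(∑ i, φ i * dq ω i))) P)
    (hdqPφ : ∀ i, Integrable (fun ω => dq ω i)
      (P.tilted (fun ω => -(∑ i, φ i * dq ω i))))
    (hcal : ∀ i, (∫ ω, dq ω i ∂(P.tilted (fun ω => -(∑ i, φ i * dq ω i)))) = 0)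
    (Q : Measure Ω) [IsProbabilityMeasure Q] (hQP : Q ≪ P)
    (hdqQ : ∀ i, Integrable (fun ω => dq ω i) Q)
    (hQ0 : ∀ i, (∫ ω, dq ω i ∂Q) = 0)
    (hS₂ : Integrable
      (fun ω => (Q.rnDeriv (P.tilted (fun ω => -(∑ i, φ i * dq ω i))) ω).toReal *
        Real.log ((Q.rnDeriv (P.tilted (fun ω => -(∑ i, φ i * dq ω i))) ω).toReal))
      (P.tilted (fun ω => -(∑ i, φ i * dq ω i)))) :
    relEntropy (P.tilted (fun ω => -(∑ i, φ i * dq ω i))) P ≤ relEntropy Q P := by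
  set f : Ω → ℝ := fun ω => -(∑ i, φ i * dq ω i)
  have : IsProbabilityMeasure (P.tilted f) := isProbabilityMeasure_tilted hint
  have hQPφ : Q ≪ P.tilted f := hQP.trans (absolutelyContinuous_tilted hint)
  have hQ_split := relEntropy_eq_relEntropy_tilted_add (f := f) hQP (integrable_sum_mul φ hdqQ).neg hint
    ((integrable_rnDeriv_mul_log_iff hQPφ).1 hS₂)
  have hPφ_split := relEntropy_eq_relEntropy_tilted_add (f := f) (tilted_absolutelyContinuous P f)
    (integrable_sum_mul φ hdqPφ).neg hint ((integrable_zero _ _ _).congr (llr_self _).symm)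
  have hfQ : ∫ ω, f ω ∂Q = 0 := by
    simp only [f, integral_neg, integral_sum_mul_eq_zero φ hdqQ hQ0, neg_zero]
  have hfPφ : ∫ ω, f ω ∂(P.tilted f) = 0 := by
    simp only [f, integral_neg, integral_sum_mul_eq_zero φ hdqPφ hcal, neg_zero]
  have hgibbs := relEntropy_nonneg hQPφ (by simp)
  rw [relEntropy_self] at hPφ_split
  linarith

/-- Minimum relative entropy of the calibrated price measure: with `P^φ` the
exponentially tilted measure of density `exp (-φ·dq) / E[exp (-φ·dq)]` relative to `P`
satisfying the calibration condition `P^φ[dq] = 0`, every equivalent probability measure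
`Q` with `Q[dq] = 0` satisfies `S[Q|P] ≥ S[P^φ|P]`. -/
theorem relEntropy_tilted_min {Ω : Type*} [MeasurableSpace Ω] {n : ℕ}
    (P : Measure Ω) [IsProbabilityMeasure P] (dq : Ω → Fin n → ℝ) (φ : Fin n → ℝ)
    (hint : Integrable (fun ω => Real.exp (-(∑ i, φ i * dq ω i))) P)
    (hdqPφ : ∀ i, Integrable (fun ω => dq ω i)
      (P.tilted (fun ω => -(∑ i, φ i * dq ω i))))
    (hcal : ∀ i, (∫ ω, dq ω i ∂(P.tilted (fun ω => -(∑ i, φ i * dq ω i)))) = 0)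
    (Q : Measure Ω) [IsProbabilityMeasure Q] (hQP : Q ≪ P) (hPQ : P ≪ Q)
    (hdqQ : ∀ i, Integrable (fun ω => dq ω i) Q)
    (hQ0 : ∀ i, (∫ ω, dq ω i ∂Q) = 0)
    (hS₂ : Integrable
      (fun ω => (Q.rnDeriv (P.tilted (fun ω => -(∑ i, φ i * dq ω i))) ω).toReal *
        Real.log ((Q.rnDeriv (P.tilted (fun ω => -(∑ i, φ i * dq ω i))) ω).toReal))
      (P.tilted (fun ω => -(∑ i, φ i * dq ω i)))) :
    relEntropy (P.tilted (fun ω => -(∑ i, φ i * dq ω i))) P ≤ relEntropy Q P :=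
  relEntropy_tilted_min_general P dq φ hint hdqPφ hcal Q hQP hdqQ hQ0 hS₂
end

section
/- Poincaré's integral formula for the matrix exponential: for any two square complex matrices X and Y of the same size, 1 − exp(−(X+Y))·exp(X) = ∫₀¹ exp(−s(X+Y))·Y·exp(sX) ds, where 1 denotes the identity matrix and the integral is the Bochner integral of the matrix-valued integrand over s ∈ [0,1]. -/
/-! In any Banach algebra the derivative of `s ↦ exp (-s • A) * exp (s • B)` is
`-exp (-s • A) * (A - B) * exp (s • B)`, so the formula is the fundamental theorem of calculus
on `[0, 1]` with `A = X + Y` and `B = X`. -/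

open NormedSpace intervalIntegral

attribute [local instance] Matrix.linftyOpNormedAddCommGroup Matrix.linftyOpNormedSpace
  Matrix.linftyOpNormedRing Matrix.linftyOpNormedAlgebra

section

variable {𝔸 : Type*} [NormedRing 𝔸] [NormedAlgebra ℝ 𝔸] [CompleteSpace 𝔸]

theorem hasDerivAt_exp_neg_smul_mul_exp_smul (A B : 𝔸) (t : ℝ) :
    HasDerivAt (fun u : ℝ => exp ((-u) • A) * exp (u • B))
      (-(exp ((-t) • A) * (A - B) * exp (t • B))) t := by
  have hA : HasDerivAt (fun u : ℝ => exp ((-u) • A)) (-(exp ((-t) • A) * A)) t := by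
    simpa [Function.comp_def] using (hasDerivAt_exp_smul_const A (-t)).scomp t (hasDerivAt_neg t)
  refine (hA.mul (hasDerivAt_exp_smul_const' B t)).congr_deriv ?_
  noncomm_ring

theorem integral_exp_neg_smul_mul_sub_mul_exp_smul (A B : 𝔸) (a b : ℝ) :
    ∫ s in a..b, exp ((-s) • A) * (A - B) * exp (s • B) =
      exp ((-a) • A) * exp (a • B) - exp ((-b) • A) * exp (b • B) := by
  have hcont : Continuous fun s : ℝ => exp ((-s) • A) * (A - B) * exp (s • B) := by
    have hA := (differentiable_exp_smul_const ℝ A).continuous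
    have hB := (differentiable_exp_smul_const ℝ B).continuous
    exact ((hA.comp continuous_neg).mul continuous_const).mul hB
  have h := integral_eq_sub_of_hasDerivAt
    (fun t _ => hasDerivAt_exp_neg_smul_mul_exp_smul A B t) (hcont.neg.intervalIntegrable a b)
  rwa [integral_neg, neg_eq_iff_eq_neg, neg_sub] at h

end

/-- Poincaré's integral formula for the matrix exponential:
`1 − exp(−(X+Y))·exp(X) = ∫₀¹ exp(−s(X+Y))·Y·exp(sX) ds`. -/
theorem poincare_matrix_exp {m : ℕ} (X Y : Matrix (Fin m) (Fin m) ℂ) :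
    (1 : Matrix (Fin m) (Fin m) ℂ) - exp (-(X + Y)) * exp X =
      ∫ s in (0:ℝ)..1, exp ((-s) • (X + Y)) * Y * exp (s • X) := by
  have h := integral_exp_neg_smul_mul_sub_mul_exp_smul (X + Y) X 0 1
  simp only [add_sub_cancel_left, neg_zero, zero_smul, exp_zero, mul_one, neg_one_smul,
    one_smul] at h
  -- `exp` in the statement is taken for the product topology on matrices, which agrees with the
  -- L∞-operator-norm topology only up to unfolding, so `rw` cannot see through it.
  exact h.symm
end

section
/- The first-order perturbation of the trace of the matrix exponential is given by the trace pairing with the exponential: for square complex matrices X and Y of the same size, the function t ↦ trace(exp(X + t·Y)) of the real variable t has derivative at t = 0 equal to trace(exp(X)·Y). -/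
/-! Expanding `exp` as its power series, `τ (exp (x + t • y)) = ∑ τ ((x + t • y) ^ n) / n!` for
every continuous linear functional `τ`. When `τ` is tracial, the derivative
`∑ᵢ τ (aⁱ y aⁿ⁻¹⁻ⁱ)` of the `n`-th term collapses by cyclicity to `n τ (aⁿ⁻¹ y)`. On `‖t‖ < 1`
these derivatives are bounded by `‖τ‖ ‖y‖ n (‖x‖ + ‖y‖)ⁿ⁻¹ / n!`, which is summable, so the series
may be differentiated termwise; at `t = 0` this gives `∑ τ (xⁿ y) / n! = τ (exp x * y)`. -/

open NormedSpace Finset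
open scoped Nat

theorem norm_pow_mul_le {𝔸 : Type*} [NormedRing 𝔸] (a b : 𝔸) (n : ℕ) :
    ‖a ^ n * b‖ ≤ ‖a‖ ^ n * ‖b‖ := by
  induction n with
  | zero => simp
  | succ n ih =>
    calc ‖a ^ (n + 1) * b‖ = ‖a * (a ^ n * b)‖ := by rw [pow_succ', mul_assoc]
      _ ≤ ‖a‖ * (‖a‖ ^ n * ‖b‖) := (norm_mul_le _ _).trans (by gcongr)
      _ = ‖a‖ ^ (n + 1) * ‖b‖ := by ring

theorem summable_inv_factorial_mul_nat_mul_pow_pred (r : ℝ) :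
    Summable fun n : ℕ => (n ! : ℝ)⁻¹ * (n * r ^ n.pred) := by
  refine (summable_nat_add_iff 1).mp <| (Real.summable_pow_div_factorial r).congr fun n => ?_
  rw [Nat.pred_succ, Nat.factorial_succ]
  push_cast
  field_simp

theorem inv_factorial_succ_smul_succ_nsmul {𝕂 F : Type*} [Field 𝕂] [CharZero 𝕂] [AddCommGroup F]
    [Module 𝕂 F] (n : ℕ) (v : F) :
    ((n + 1)! : 𝕂)⁻¹ • ((n + 1) • v) = (n ! : 𝕂)⁻¹ • v := by
  rw [← Nat.cast_smul_eq_nsmul 𝕂, smul_smul, Nat.factorial_succ]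
  congr 1
  push_cast
  field_simp

theorem norm_add_smul_le {𝕂 E : Type*} [NormedField 𝕂] [SeminormedAddCommGroup E]
    [NormedSpace 𝕂 E] (x y : E) {t : 𝕂} (ht : ‖t‖ ≤ 1) : ‖x + t • y‖ ≤ ‖x‖ + ‖y‖ :=
  (norm_add_le _ _).trans <| by
    rw [norm_smul]
    gcongr
    exact mul_le_of_le_one_left (norm_nonneg _) ht

section TracialFunctional

variable {𝕂 𝔸 F : Type*} [RCLike 𝕂] [NormedRing 𝔸] [NormedAlgebra 𝕂 𝔸]
  [NormedAddCommGroup F] [NormedSpace 𝕂 F]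

theorem map_sum_pow_mul_mul_pow (τ : 𝔸 →L[𝕂] F) (hτ : ∀ a b, τ (a * b) = τ (b * a))
    (a b : 𝔸) (n : ℕ) :
    τ (∑ i ∈ range n, a ^ (n.pred - i) * b * a ^ i) = n • τ (a ^ n.pred * b) := by
  rw [map_sum, ← card_range n, ← sum_const, card_range]
  refine sum_congr rfl fun i hi => ?_
  rw [hτ, ← mul_assoc, ← pow_add, Nat.add_sub_cancel' (Nat.le_pred_of_lt (mem_range.mp hi))]

theorem hasDerivAt_map_pow_add_smul (τ : 𝔸 →L[𝕂] F) (hτ : ∀ a b, τ (a * b) = τ (b * a))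
    (x y : 𝔸) (n : ℕ) (t : 𝕂) :
    HasDerivAt (fun s : 𝕂 => τ ((x + s • y) ^ n)) (n • τ ((x + t • y) ^ n.pred * y)) t := by
  have hline : HasDerivAt (fun s : 𝕂 => x + s • y) y t := by
    simpa using ((hasDerivAt_id t).smul_const y).const_add x
  rw [← map_sum_pow_mul_mul_pow τ hτ]
  exact τ.hasFDerivAt.comp_hasDerivAt t (hline.fun_pow' n)

theorem norm_map_pow_mul_le (τ : 𝔸 →L[𝕂] F) (a b : 𝔸) (n : ℕ) :
    ‖τ (a ^ n * b)‖ ≤ ‖τ‖ * (‖a‖ ^ n * ‖b‖) :=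
  (τ.le_opNorm _).trans (by gcongr; exact norm_pow_mul_le a b n)

variable [CompleteSpace 𝔸]

theorem hasSum_map_exp_mul (τ : 𝔸 →L[𝕂] F) (a b : 𝔸) :
    HasSum (fun n => (n !⁻¹ : 𝕂) • τ (a ^ n * b)) (τ (exp a * b)) := by
  simpa only [smul_mul_assoc, map_smul] using
    ((exp_series_hasSum_exp' (𝕂 := 𝕂) a).mul_right b).mapL τ

theorem hasSum_inv_factorial_smul_nsmul_map_pow_pred_mul (τ : 𝔸 →L[𝕂] F) (a b : 𝔸) :
    HasSum (fun n => (n !⁻¹ : 𝕂) • (n • τ (a ^ n.pred * b))) (τ (exp a * b)) := by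
  rw [← hasSum_nat_add_iff' 1]
  simpa [inv_factorial_succ_smul_succ_nsmul] using hasSum_map_exp_mul τ a b

theorem hasDerivAt_map_exp_add_smul [CompleteSpace F] (τ : 𝔸 →L[𝕂] F)
    (hτ : ∀ a b, τ (a * b) = τ (b * a)) (x y : 𝔸) :
    HasDerivAt (fun t : 𝕂 => τ (exp (x + t • y))) (τ (exp x * y)) 0 := by
  set r := ‖x‖ + ‖y‖
  have hbound : ∀ (n : ℕ), ∀ t ∈ Metric.ball (0 : 𝕂) 1,
      ‖(n !⁻¹ : 𝕂) • (n • τ ((x + t • y) ^ n.pred * y))‖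
        ≤ ‖τ‖ * ‖y‖ * ((n ! : ℝ)⁻¹ * (n * r ^ n.pred)) := by
    intro n t ht
    have hxy : ‖x + t • y‖ ≤ r := norm_add_smul_le x y (mem_ball_zero_iff.mp ht).le
    calc ‖(n !⁻¹ : 𝕂) • (n • τ ((x + t • y) ^ n.pred * y))‖
        ≤ (n ! : ℝ)⁻¹ * (n * (‖τ‖ * (‖x + t • y‖ ^ n.pred * ‖y‖))) := by
          rw [norm_smul, norm_inv, RCLike.norm_natCast]
          gcongr
          exact norm_nsmul_le.trans (by gcongr; exact norm_map_pow_mul_le τ _ _ _)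
      _ ≤ (n ! : ℝ)⁻¹ * (n * (‖τ‖ * (r ^ n.pred * ‖y‖))) := by gcongr
      _ = ‖τ‖ * ‖y‖ * ((n ! : ℝ)⁻¹ * (n * r ^ n.pred)) := by ring
  have hseries := hasDerivAt_tsum_of_isPreconnected
    (g := fun n t => (n !⁻¹ : 𝕂) • τ ((x + t • y) ^ n))
    (g' := fun n t => (n !⁻¹ : 𝕂) • (n • τ ((x + t • y) ^ n.pred * y)))
    ((summable_inv_factorial_mul_nat_mul_pow_pred r).mul_left _) Metric.isOpen_ball
    (convex_ball (0 : 𝕂) 1).isPreconnected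
    (fun n t _ => (hasDerivAt_map_pow_add_smul τ hτ x y n t).const_smul (n !⁻¹ : 𝕂))
    hbound (Metric.mem_ball_self one_pos) (by simpa using (hasSum_map_exp_mul τ x 1).summable)
    (Metric.mem_ball_self one_pos)
  simp only [zero_smul, add_zero,
    (hasSum_inv_factorial_smul_nsmul_map_pow_pred_mul τ x y).tsum_eq] at hseries
  convert hseries using 2 with t
  simpa using (hasSum_map_exp_mul τ (x + t • y) 1).tsum_eq.symm

end TracialFunctional

attribute [local instance] Matrix.linftyOpNormedAddCommGroup Matrix.linftyOpNormedSpace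
  Matrix.linftyOpNormedRing Matrix.linftyOpNormedAlgebra

/-- First-order perturbation of the trace of the matrix exponential: the function
`t ↦ trace (exp (X + t·Y))` has derivative `trace (exp X · Y)` at `t = 0`. -/
theorem hasDerivAt_trace_exp {m : ℕ} (X Y : Matrix (Fin m) (Fin m) ℂ) :
    HasDerivAt (fun t : ℝ => Matrix.trace (exp (X + (t : ℂ) • Y)))
      (Matrix.trace (exp X * Y)) 0 := by
  have h := hasDerivAt_map_exp_add_smul
    (LinearMap.toContinuousLinearMap (Matrix.traceLinearMap (Fin m) ℂ ℂ))
    (fun a b => Matrix.trace_mul_comm a b) X Y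
  rw [← Complex.ofReal_zero] at h
  exact h.comp_ofReal
end

section
/- In the two-state quantum model with maximal rotation between the eigenbases, the spread portfolio has eigenvalues with square-root convexity in the strike: let Q₁, Q₂, B₁, B₂, k be real numbers, set Q̄ := (Q₁+Q₂)/2, Q̂ := (Q₁−Q₂)/2, B̄ := (B₁+B₂)/2, B̂ := (B₁−B₂)/2, let Q = diag(Q₁,Q₂) and B = diag(B₁,B₂) be 2×2 diagonal matrices, and let U be the 2×2 unitary with all entries of modulus 1/√2 given by U_{jk} = (1/√2)·exp(2πi·jk/2). Then the Hermitian matrix U·Q·U⁻¹ − k·B has eigenvalues (Q̄ − kB̄) + √(Q̂² + k²B̂²) and (Q̄ − kB̄) − √(Q̂² + k²B̂²); consequently the normalised trace of its positive part equals (1/2)·((Q̄−kB̄) + √(Q̂²+k²B̂²))⁺ + (1/2)·((Q̄−kB̄) − √(Q̂²+k²B̂²))⁺. -/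
/-!
Conjugating `diag(Q₁, Q₂)` by the two-point Fourier (Hadamard) matrix gives the real symmetric
matrix with diagonal `Q̄` and off-diagonal `Q̂`, so the spread portfolio is the real symmetric
matrix with diagonal `Q̄ - kB₁, Q̄ - kB₂` and off-diagonal `Q̂`. The eigenvalues of a Hermitian
`2 × 2` matrix are the two roots of the quadratic fixed by its trace and determinant, which here
are `Q̄ - kB̄ ± √(Q̂² + k²B̂²)`. Since the eigenvector matrix is unitary, the trace of the positive
part is the sum of the positive parts of the eigenvalues.
-/

open Matrix

/-- The positive part `M⁺ := Σ (λᵢ)⁺ Pᵢ` of a Hermitian matrix, formed by applying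
`x ↦ max x 0` to the eigenvalues in a spectral decomposition. -/
noncomputable def hermPosPart {n : Type*} [Fintype n] [DecidableEq n]
    {M : Matrix n n ℂ} (hM : M.IsHermitian) : Matrix n n ℂ :=
  (hM.eigenvectorUnitary : Matrix n n ℂ) *
    Matrix.diagonal (fun i => ((max (hM.eigenvalues i) 0 : ℝ) : ℂ)) *
    star (hM.eigenvectorUnitary : Matrix n n ℂ)

theorem Multiset.pair_eq_pair_of_add_eq_of_mul_eq {R : Type*} [CommRing R] [IsDomain R]
    {x y a b : R} (hs : x + y = a + b) (hp : x * y = a * b) :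
    ({x, y} : Multiset R) = {a, b} := by
  have hroot : (x - a) * (x - b) = 0 := by linear_combination x * hs - hp
  rcases mul_eq_zero.mp hroot with hxa | hxb
  · have hyb : y = b := by linear_combination hs - hxa
    rw [sub_eq_zero.mp hxa, hyb]
  · have hya : y = a := by linear_combination hs - hxb
    rw [sub_eq_zero.mp hxb, hya, Multiset.pair_comm]

namespace Matrix

theorem trace_hermPosPart {n : Type*} [Fintype n] [DecidableEq n]
    {M : Matrix n n ℂ} (hM : M.IsHermitian) :
    (hermPosPart hM).trace = ∑ i, ((max (hM.eigenvalues i) 0 : ℝ) : ℂ) := by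
  rw [hermPosPart, trace_mul_comm, ← Matrix.mul_assoc,
    (mem_unitaryGroup_iff').mp hM.eigenvectorUnitary.2, Matrix.one_mul, trace_diagonal]

theorem isHermitian_fin_two_of_real {a b : ℝ} {c : ℂ} :
    (!![(a : ℂ), c; star c, (b : ℂ)]).IsHermitian := by
  ext i j
  fin_cases i <;> fin_cases j <;> simp

theorem IsHermitian.eigenvalues_fin_two {a b : ℝ} {c : ℂ} {M : Matrix (Fin 2) (Fin 2) ℂ}
    (hM : M.IsHermitian) (hMeq : M = !![(a : ℂ), c; star c, (b : ℂ)]) :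
    ({hM.eigenvalues 0, hM.eigenvalues 1} : Multiset ℝ) =
      {(a + b) / 2 + √(((a - b) / 2) ^ 2 + ‖c‖ ^ 2),
        (a + b) / 2 - √(((a - b) / 2) ^ 2 + ‖c‖ ^ 2)} := by
  have hsqrt : √(((a - b) / 2) ^ 2 + ‖c‖ ^ 2) ^ 2 = ((a - b) / 2) ^ 2 + ‖c‖ ^ 2 :=
    Real.sq_sqrt (by positivity)
  apply Multiset.pair_eq_pair_of_add_eq_of_mul_eq
  · have htrace := hM.trace_eq_sum_eigenvalues
    rw [Fin.sum_univ_two, show M.trace = a + b by rw [hMeq, trace_fin_two_of]] at htrace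
    have hsum : hM.eigenvalues 0 + hM.eigenvalues 1 = a + b := by
      apply Complex.ofReal_injective; push_cast; exact htrace.symm
    linarith
  · have hdet := hM.det_eq_prod_eigenvalues
    have hdetM : M.det = a * b - ‖c‖ ^ 2 := by
      rw [hMeq, det_fin_two_of, Complex.star_def, Complex.mul_conj']
    rw [Fin.prod_univ_two, hdetM] at hdet
    have hprod : hM.eigenvalues 0 * hM.eigenvalues 1 = a * b - ‖c‖ ^ 2 := by
      apply Complex.ofReal_injective; push_cast; exact hdet.symm
    linear_combination hprod + hsqrt

end Matrix

noncomputable def hadamardMatrix : Matrix (Fin 2) (Fin 2) ℂ :=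
  ((1 / √2 : ℝ) : ℂ) • !![1, 1; 1, -1]

theorem Complex.ofReal_one_div_sqrt_two_sq : ((1 / √2 : ℝ) : ℂ) ^ 2 = 1 / 2 := by
  rw [← Complex.ofReal_pow, div_pow, one_pow, Real.sq_sqrt zero_le_two]; norm_num

theorem of_exp_eq_hadamardMatrix :
    (Matrix.of fun j k : Fin 2 =>
      ((1 / √2 : ℝ) : ℂ) * Complex.exp (2 * Real.pi * Complex.I * ((j : ℕ) * (k : ℕ)) / 2)) =
      hadamardMatrix := by
  have hexp : Complex.exp (2 * Real.pi * Complex.I / 2) = -1 := by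
    rw [mul_div_right_comm, mul_div_cancel_left₀ _ two_ne_zero, Complex.exp_pi_mul_I]
  ext j k
  fin_cases j <;> fin_cases k <;> simp [hadamardMatrix, hexp]

theorem hadamardMatrix_mul_self : hadamardMatrix * hadamardMatrix = 1 := by
  rw [hadamardMatrix, smul_mul_smul_comm, ← sq, Complex.ofReal_one_div_sqrt_two_sq]
  ext i j
  fin_cases i <;> fin_cases j <;> norm_num [mul_fin_two]

theorem hadamardMatrix_inv : hadamardMatrix⁻¹ = hadamardMatrix :=
  inv_eq_right_inv hadamardMatrix_mul_self

theorem hadamardMatrix_mul_diagonal_mul_hadamardMatrix (a b : ℂ) :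
    hadamardMatrix * diagonal ![a, b] * hadamardMatrix =
      !![(a + b) / 2, (a - b) / 2; (a - b) / 2, (a + b) / 2] := by
  rw [hadamardMatrix, smul_mul, mul_smul_comm, smul_mul, smul_smul, ← sq, Complex.ofReal_one_div_sqrt_two_sq,
    diagonal_vec2, mul_fin_two, mul_fin_two, smul_of]
  ext i j
  fin_cases i <;> fin_cases j <;> simp <;> ring

/-- In the two-state quantum model with maximal rotation between the eigenbases, the
spread portfolio `U·Q·U⁻¹ − k·B` is Hermitian with eigenvalues
`(Q̄ − kB̄) ± √(Q̂² + k²B̂²)`, and the normalised trace of its positive part is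
`(1/2)((Q̄−kB̄) + √(Q̂²+k²B̂²))⁺ + (1/2)((Q̄−kB̄) − √(Q̂²+k²B̂²))⁺`. -/
theorem quantum_spread_eigenvalues (Q₁ Q₂ B₁ B₂ k : ℝ)
    (Qbar Qhat Bbar Bhat : ℝ)
    (hQbar : Qbar = (Q₁ + Q₂) / 2) (hQhat : Qhat = (Q₁ - Q₂) / 2)
    (hBbar : Bbar = (B₁ + B₂) / 2) (hBhat : Bhat = (B₁ - B₂) / 2)
    (Q B U : Matrix (Fin 2) (Fin 2) ℂ)
    (hQ : Q = Matrix.diagonal ![(Q₁ : ℂ), (Q₂ : ℂ)])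
    (hB : B = Matrix.diagonal ![(B₁ : ℂ), (B₂ : ℂ)])
    (hU : U = Matrix.of fun j k : Fin 2 =>
      ((1 / Real.sqrt 2 : ℝ) : ℂ) *
        Complex.exp (2 * Real.pi * Complex.I * ((j : ℕ) * (k : ℕ)) / 2)) :
    ∃ hM : (U * Q * U⁻¹ - (k : ℂ) • B).IsHermitian,
      ({hM.eigenvalues 0, hM.eigenvalues 1} : Multiset ℝ) =
        ({(Qbar - k * Bbar) + Real.sqrt (Qhat ^ 2 + k ^ 2 * Bhat ^ 2),
          (Qbar - k * Bbar) - Real.sqrt (Qhat ^ 2 + k ^ 2 * Bhat ^ 2)} : Multiset ℝ) ∧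
      (1 / 2 : ℂ) * Matrix.trace (hermPosPart hM) =
        (((1 / 2) * max ((Qbar - k * Bbar) + Real.sqrt (Qhat ^ 2 + k ^ 2 * Bhat ^ 2)) 0 +
          (1 / 2) * max ((Qbar - k * Bbar) - Real.sqrt (Qhat ^ 2 + k ^ 2 * Bhat ^ 2)) 0 : ℝ) : ℂ) := by
  have hMeq : U * Q * U⁻¹ - (k : ℂ) • B =
      !![((Qbar - k * B₁ : ℝ) : ℂ), (Qhat : ℂ); star (Qhat : ℂ), ((Qbar - k * B₂ : ℝ) : ℂ)] := by
    rw [hU, of_exp_eq_hadamardMatrix, hadamardMatrix_inv, hQ,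
      hadamardMatrix_mul_diagonal_mul_hadamardMatrix, hB, diagonal_vec2]
    ext i j
    fin_cases i <;> fin_cases j <;> simp [hQbar, hQhat]
  have hM : (U * Q * U⁻¹ - (k : ℂ) • B).IsHermitian := hMeq ▸ isHermitian_fin_two_of_real
  have heig := hM.eigenvalues_fin_two hMeq
  have hcentre : (Qbar - k * B₁ + (Qbar - k * B₂)) / 2 = Qbar - k * Bbar := by
    rw [hBbar]; ring
  have hradius : ((Qbar - k * B₁ - (Qbar - k * B₂)) / 2) ^ 2 + ‖(Qhat : ℂ)‖ ^ 2 =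
      Qhat ^ 2 + k ^ 2 * Bhat ^ 2 := by
    rw [Complex.norm_real, Real.norm_eq_abs, sq_abs, hBhat]; ring
  rw [hcentre, hradius] at heig
  refine ⟨hM, heig, ?_⟩
  have hpos := congrArg (fun s : Multiset ℝ => (s.map (max · 0)).sum) heig
  simp only [Multiset.insert_eq_cons, Multiset.map_cons, Multiset.map_singleton,
    Multiset.sum_cons, Multiset.sum_singleton] at hpos
  rw [trace_hermPosPart, Fin.sum_univ_two, ← Complex.ofReal_add, hpos]
  push_cast
  ring
end

section
/- The discounted return on capital of a margined bilateral derivative trade equals the discounted return on the derivative adjusted by the two default options: let b, db, p, dp, c₁, c₂ be real numbers with b > 0 and b + db > 0. Define x₁ := c₁(1 + db/b) + (dp − (p/b)·db), x₂ := c₂(1 + db/b) − (dp − (p/b)·db), the final capital c₁ + dc₁ := (x₁)⁺ − (−x₂)⁺, and the discounted derivative return Δ := (p+dp)/(b+db) − p/b. Then (c₁ + dc₁)/(b + db) − c₁/b = (−c₁/b − Δ)⁺ − (Δ − c₂/b)⁺ + Δ, where x⁺ := max(x,0). -/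
/-! Discounting by the margin account price `b + db` is linear and commutes with positive parts,
so the discounted final capital is `(c₁/b + Δ)⁺ - (Δ - c₂/b)⁺`. Writing `c₁/b + Δ` as
`(c₁/b + Δ)⁺ - (-c₁/b - Δ)⁺` gives the identity. -/

/-- `c * (1 + db / b)` is capital `c` grown in the margin account, `dp - p / b * db` the derivative's
gain in excess of the margin account. -/
theorem discounted_margin_value {b db p dp : ℝ} (hb : b ≠ 0) (hbdb : b + db ≠ 0) (c : ℝ) :
    (c * (1 + db / b) + (dp - p / b * db)) / (b + db) = c / b + ((p + dp) / (b + db) - p / b) := by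
  field_simp
  ring

theorem max_zero_div_of_pos {s : ℝ} (hs : 0 < s) (x : ℝ) : max x 0 / s = max (x / s) 0 := by
  rw [← max_div_div_right hs.le, zero_div]

/-- The discounted return on capital of a margined bilateral derivative trade equals the
discounted return on the derivative adjusted by the two default options:
`(c₁+dc₁)/(b+db) − c₁/b = (−c₁/b − Δ)⁺ − (Δ − c₂/b)⁺ + Δ` where
`Δ := (p+dp)/(b+db) − p/b` and `c₁+dc₁ := (x₁)⁺ − (−x₂)⁺`. -/
theorem discounted_return_on_capital (b db p dp c₁ c₂ : ℝ) (hb : 0 < b)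
    (hbdb : 0 < b + db)
    (x₁ x₂ Δ : ℝ)
    (hx₁ : x₁ = c₁ * (1 + db / b) + (dp - (p / b) * db))
    (hx₂ : x₂ = c₂ * (1 + db / b) - (dp - (p / b) * db))
    (hΔ : Δ = (p + dp) / (b + db) - p / b) :
    (max x₁ 0 - max (-x₂) 0) / (b + db) - c₁ / b =
      max (-(c₁ / b) - Δ) 0 - max (Δ - c₂ / b) 0 + Δ := by
  have hx₁' : x₁ / (b + db) = c₁ / b + Δ := by
    rw [hx₁, hΔ, discounted_margin_value hb.ne' hbdb.ne']
  have hx₂' : -x₂ / (b + db) = Δ - c₂ / b := by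
    have hneg : -x₂ = -c₂ * (1 + db / b) + (dp - p / b * db) := by rw [hx₂]; ring
    rw [hneg, hΔ, discounted_margin_value hb.ne' hbdb.ne', neg_div]
    ring
  rw [sub_div, max_zero_div_of_pos hbdb, max_zero_div_of_pos hbdb, hx₁', hx₂']
  have hsplit := max_zero_sub_max_neg_zero_eq_self (c₁ / b + Δ)
  rw [neg_add'] at hsplit
  linarith
end
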